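/- Let K : S × S → ℝ be a bounded symmetric measurable kernel, G a probability measure on S, and u : S → ℝ^p a bounded measurable function with ∫ u dG = 0 and J = ∫ u uᵀ dG invertible. Define P*(x,y) = u*(x)ᵀ (J*)^{-1} u*(y) with u*(x) = (1, u(x)ᵀ)ᵀ and J* = ∫ u* u*ᵀ dG, and let the score-centered kernel be K_{scen(G)}(x,y) = K(x,y) − ∫ P*(x,z) K(z,y) dG(z) − ∫ K(x,z) P*(z,y) dG(z) + ∬ P*(x,z) K(z,w) P*(w,y) dG(z) dG(w). If x_1,…,x_n ∈ S satisfy the score equation Σ_{i=1}^n u(x_i) = 0, then Σ_{i=1}^n Σ_{j=1}^n K_{scen(G)}(x_i, x_j) = Σ_{i=1}^n Σ_{j=1}^n K_{cen(G)}(x_i, x_j); equivalently, with F̂ the empirical measure of x_1,…,x_n, d_K(F̂, G) = ∬ K_{scen(G)}(x,y) dF̂(x) dF̂(y). -/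

import Mathlib

/-!
The score equation says that the extended scores of the sample add up to `n e₀`, with
`e₀ = (1, 0, …, 0)`. Since `∫ u dG = 0`, the first row and column of `J*` are `e₀`, so `e₀` is
fixed by `J*` and by `(J*)⁻¹`; as `u*(z)₀ = 1`, this gives `∑ᵢ P*(xᵢ, z) = n = ∑ⱼ P*(z, xⱼ)` for
every `z`. Hence, summed over the sample, `P*` acts exactly like the constant kernel `1`, and each
term of `K_{scen(G)}` collapses to the matching term of `K_{cen(G)}`. Finally, the quadratic
distance from the empirical measure is `n⁻²` times the sample sum of `K_{cen(G)}`.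
-/

open MeasureTheory Matrix

/-- The quadratic distance d_K(F,G) = ∬ K(s,t) d(F−G)(s) d(F−G)(t), written as the
iterated integral of s ↦ ∫ K(s,t) d(F−G)(t) against the signed measure F−G. -/
noncomputable def quadDist {S : Type*} [MeasurableSpace S] (K : S → S → ℝ)
    (F G : Measure S) : ℝ :=
  (∫ s, (∫ t, K s t ∂F - ∫ t, K s t ∂G) ∂F) - ∫ s, (∫ t, K s t ∂F - ∫ t, K s t ∂G) ∂G

/-- The G-centered kernel
K_{cen(G)}(x,y) = K(x,y) − K(x,G) − K(G,y) + K(G,G). -/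
noncomputable def kcen {S : Type*} [MeasurableSpace S] (K : S → S → ℝ) (G : Measure S)
    (x y : S) : ℝ :=
  K x y - ∫ t, K x t ∂G - ∫ s, K s y ∂G + ∫ s, ∫ t, K s t ∂G ∂G

/-- The empirical measure of x_1,…,x_n, assigning mass 1/n to each observation. -/
noncomputable def empiricalMeasure {S : Type*} [MeasurableSpace S] (n : ℕ)
    (x : Fin n → S) : Measure S :=
  ((n : ENNReal))⁻¹ • ∑ j, Measure.dirac (x j)

/-- The extended score vector u*(x) = (1, u(x)ᵀ)ᵀ. -/
def extScore {p : ℕ} (u : Fin p → ℝ) : Fin (p + 1) → ℝ := Fin.cons 1 u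

open Function (uncurry)

section

variable {S : Type*} [MeasurableSpace S]

structure IsBoundedKernel (K : S → S → ℝ) : Prop where
  measurable : Measurable (uncurry K)
  bounded : ∃ C, ∀ x y, |K x y| ≤ C

noncomputable def kcomp (G : Measure S) (P K : S → S → ℝ) (x y : S) : ℝ :=
  ∫ z, P x z * K z y ∂G

/-- With `P = extProj G u` this is the score-centered kernel `K_{scen(G)}`. -/
noncomputable def projCentered (G : Measure S) (P K : S → S → ℝ) (x y : S) : ℝ :=
  K x y - kcomp G P K x y - kcomp G K P x y + kcomp G P (kcomp G K P) x y

lemma kcomp_kcomp_apply (G : Measure S) (P K L : S → S → ℝ) (x y : S) :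
    kcomp G P (kcomp G K L) x y = ∫ z, ∫ w, P x z * K z w * L w y ∂G ∂G := by
  simp only [kcomp, ← integral_const_mul, mul_assoc]

lemma integrable_of_abs_le {α : Type*} [MeasurableSpace α] {μ : Measure α} [IsFiniteMeasure μ]
    {f : α → ℝ} (hf : Measurable f) {C : ℝ} (hC : ∀ x, |f x| ≤ C) : Integrable f μ :=
  .of_bound hf.aestronglyMeasurable C (ae_of_all _ hC)

namespace IsBoundedKernel

variable {G : Measure S} {K L : S → S → ℝ}

lemma exists_nonneg_bound (hK : IsBoundedKernel K) : ∃ C, 0 ≤ C ∧ ∀ x y, |K x y| ≤ C :=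
  let ⟨C, hC⟩ := hK.bounded
  ⟨|C|, abs_nonneg C, fun x y => (hC x y).trans (le_abs_self C)⟩

lemma measurable_left (hK : IsBoundedKernel K) (y : S) : Measurable fun x => K x y :=
  hK.measurable.comp (measurable_id.prodMk measurable_const)

lemma measurable_right (hK : IsBoundedKernel K) (x : S) : Measurable (K x) :=
  hK.measurable.comp (measurable_const.prodMk measurable_id)

lemma measurable_integral_right [SFinite G] (hK : IsBoundedKernel K) :
    Measurable fun x => ∫ y, K x y ∂G :=
  hK.measurable.stronglyMeasurable.integral_prod_right'.measurable

lemma integrable_left [IsFiniteMeasure G] (hK : IsBoundedKernel K) (y : S) :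
    Integrable (fun x => K x y) G :=
  let ⟨_, hC⟩ := hK.bounded
  integrable_of_abs_le (hK.measurable_left y) fun x => hC x y

lemma integrable_integral_right [IsFiniteMeasure G] (hK : IsBoundedKernel K) :
    Integrable (fun x => ∫ y, K x y ∂G) G :=
  let ⟨_, hC⟩ := hK.bounded
  (integrable_of_abs_le (μ := G.prod G) hK.measurable fun q => hC q.1 q.2).integral_prod_left

lemma sub (hK : IsBoundedKernel K) (hL : IsBoundedKernel L) :
    IsBoundedKernel fun x y => K x y - L x y where
  measurable := hK.measurable.sub hL.measurable
  bounded := by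
    obtain ⟨CK, hCK⟩ := hK.bounded
    obtain ⟨CL, hCL⟩ := hL.bounded
    exact ⟨CK + CL, fun x y => (abs_sub _ _).trans (add_le_add (hCK x y) (hCL x y))⟩

lemma add (hK : IsBoundedKernel K) (hL : IsBoundedKernel L) :
    IsBoundedKernel fun x y => K x y + L x y where
  measurable := hK.measurable.add hL.measurable
  bounded := by
    obtain ⟨CK, hCK⟩ := hK.bounded
    obtain ⟨CL, hCL⟩ := hL.bounded
    exact ⟨CK + CL, fun x y => (abs_add_le _ _).trans (add_le_add (hCK x y) (hCL x y))⟩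

lemma integrable_mul [IsFiniteMeasure G] (hK : IsBoundedKernel K) (hL : IsBoundedKernel L)
    (x y : S) : Integrable (fun z => K x z * L z y) G := by
  obtain ⟨CK, hCK⟩ := hK.bounded
  exact (hL.integrable_left y).bdd_mul (hK.measurable_right x).aestronglyMeasurable
    (ae_of_all _ fun z => hCK x z)

protected lemma kcomp [IsFiniteMeasure G] (hK : IsBoundedKernel K) (hL : IsBoundedKernel L) :
    IsBoundedKernel (kcomp G K L) where
  measurable := by
    have : Measurable fun q : (S × S) × S => K q.1.1 q.2 * L q.2 q.1.2 :=
      (hK.measurable.comp (measurable_fst.fst.prodMk measurable_snd)).mul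
        (hL.measurable.comp (measurable_snd.prodMk measurable_fst.snd))
    exact this.stronglyMeasurable.integral_prod_right'.measurable
  bounded := by
    obtain ⟨CK, hCK0, hCK⟩ := hK.exists_nonneg_bound
    obtain ⟨CL, -, hCL⟩ := hL.exists_nonneg_bound
    refine ⟨CK * CL * G.real Set.univ, fun x y => ?_⟩
    refine norm_integral_le_of_norm_le_const (μ := G) (f := fun z => K x z * L z y)
      (ae_of_all _ fun z => ?_)
    simpa only [Real.norm_eq_abs, abs_mul] using
      mul_le_mul (hCK x z) (hCL z y) (abs_nonneg _) hCK0

protected lemma projCentered [IsFiniteMeasure G] {P : S → S → ℝ} (hK : IsBoundedKernel K)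
    (hP : IsBoundedKernel P) : IsBoundedKernel (projCentered G P K) :=
  ((hK.sub (hP.kcomp hK)).sub (hK.kcomp hP)).add (hP.kcomp (hK.kcomp hP))

end IsBoundedKernel

lemma IsBoundedKernel.of_continuous {E : Type*} [NormedAddCommGroup E] [ProperSpace E]
    [MeasurableSpace E] [BorelSpace E] {φ : S → E} (hφ : Measurable φ) {r : ℝ}
    (hr : ∀ x, ‖φ x‖ ≤ r) {g : E → E → ℝ} (hg : Continuous (uncurry g)) :
    IsBoundedKernel fun x y => g (φ x) (φ y) where
  measurable := hg.measurable.comp (hφ.prodMap hφ)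
  bounded := by
    obtain ⟨C, hC⟩ := ((isCompact_closedBall (0 : E) r).prod
      (isCompact_closedBall (0 : E) r)).exists_bound_of_continuousOn hg.continuousOn
    exact ⟨C, fun x y => hC (φ x, φ y) ⟨by simpa using hr x, by simpa using hr y⟩⟩

lemma integral_empiricalMeasure {n : ℕ} (x : Fin n → S) {f : S → ℝ} (hf : Measurable f) :
    ∫ s, f s ∂(empiricalMeasure n x) = (∑ i, f (x i)) / n := by
  rw [empiricalMeasure, integral_smul_measure, integral_finsetSum_measure fun i _ =>
    integrable_dirac' hf.stronglyMeasurable enorm_lt_top]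
  simp [integral_dirac' f _ hf.stronglyMeasurable, ENNReal.toReal_inv, div_eq_inv_mul]

lemma integral_integral_empiricalMeasure {n : ℕ} (x : Fin n → S) {f : S → S → ℝ}
    (hf : Measurable (uncurry f)) :
    ∫ s, ∫ t, f s t ∂(empiricalMeasure n x) ∂(empiricalMeasure n x)
      = (∑ i, ∑ j, f (x i) (x j)) / n ^ 2 := by
  have hrow : Measurable fun s => (∑ j, f s (x j)) / n :=
    (Finset.measurable_sum _ fun j _ => hf.comp (measurable_id.prodMk measurable_const)).div_const _
  have hslice (s : S) : Measurable (f s) := hf.comp (measurable_const.prodMk measurable_id)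
  simp_rw [integral_empiricalMeasure x (hslice _)]
  rw [integral_empiricalMeasure x hrow, ← Finset.sum_div, div_div, sq]

lemma sum_sum_kcen {ι : Type*} [Fintype ι] (K : S → S → ℝ) (G : Measure S) (x : ι → S) :
    ∑ i, ∑ j, kcen K G (x i) (x j)
      = ∑ i, ∑ j, K (x i) (x j) - Fintype.card ι * ∑ i, ∫ t, K (x i) t ∂G
        - Fintype.card ι * ∑ j, ∫ s, K s (x j) ∂G
        + (Fintype.card ι : ℝ) ^ 2 * ∫ s, ∫ t, K s t ∂G ∂G := by
  simp only [kcen, Finset.sum_sub_distrib, Finset.sum_add_distrib, Finset.sum_const,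
    Finset.card_univ, nsmul_eq_mul, Finset.mul_sum]
  ring

lemma quadDist_empiricalMeasure {G : Measure S} [IsFiniteMeasure G] {K : S → S → ℝ}
    (hK : IsBoundedKernel K) {n : ℕ} (hn : n ≠ 0) (x : Fin n → S) :
    quadDist K (empiricalMeasure n x) G = (∑ i, ∑ j, kcen K G (x i) (x j)) / n ^ 2 := by
  have hsum_int : Integrable (fun s => ∑ j, K s (x j)) G :=
    integrable_finsetSum _ fun j _ => hK.integrable_left (x j)
  have hdiff : Measurable fun s => (∑ j, K s (x j)) / n - ∫ t, K s t ∂G :=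
    ((Finset.measurable_sum _ fun j _ => hK.measurable_left (x j)).div_const _).sub
      hK.measurable_integral_right
  simp_rw [quadDist, integral_empiricalMeasure x (hK.measurable_right _)]
  rw [integral_empiricalMeasure x hdiff,
    integral_sub (hsum_int.div_const _) hK.integrable_integral_right, integral_div,
    integral_finsetSum _ fun j _ => hK.integrable_left (x j), sum_sum_kcen]
  simp only [Fintype.card_fin, Finset.sum_sub_distrib, ← Finset.sum_div]
  field_simp
  ring

section MarginalSums

variable {ι : Type*} [Fintype ι] {G : Measure S} [IsFiniteMeasure G] {P K : S → S → ℝ}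
  {x : ι → S} {c : ℝ}

lemma sum_kcomp_left (hP : IsBoundedKernel P) (hK : IsBoundedKernel K)
    (hsum : ∀ z, ∑ i, P (x i) z = c) (y : S) :
    ∑ i, kcomp G P K (x i) y = c * ∫ z, K z y ∂G := by
  simp only [kcomp]
  rw [← integral_finsetSum _ fun i _ => hP.integrable_mul hK (x i) y]
  simp_rw [← Finset.sum_mul, hsum, integral_const_mul]

lemma sum_kcomp_right (hK : IsBoundedKernel K) (hP : IsBoundedKernel P)
    (hsum : ∀ z, ∑ j, P z (x j) = c) (w : S) :
    ∑ j, kcomp G K P w (x j) = c * ∫ z, K w z ∂G := by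
  simp only [kcomp]
  rw [← integral_finsetSum _ fun j _ => hK.integrable_mul hP w (x j)]
  simp_rw [← Finset.mul_sum, hsum, integral_mul_const, mul_comm]

lemma sum_sum_projCentered (hK : IsBoundedKernel K) (hP : IsBoundedKernel P)
    (hleft : ∀ z, ∑ i, P (x i) z = Fintype.card ι)
    (hright : ∀ z, ∑ j, P z (x j) = Fintype.card ι) :
    ∑ i, ∑ j, projCentered G P K (x i) (x j) = ∑ i, ∑ j, kcen K G (x i) (x j) := by
  have hPK : ∑ i, ∑ j, kcomp G P K (x i) (x j) = Fintype.card ι * ∑ j, ∫ z, K z (x j) ∂G := by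
    rw [Finset.sum_comm, Finset.mul_sum]
    exact Finset.sum_congr rfl fun j _ => sum_kcomp_left hP hK hleft (x j)
  have hKP : ∑ i, ∑ j, kcomp G K P (x i) (x j) = Fintype.card ι * ∑ i, ∫ z, K (x i) z ∂G := by
    rw [Finset.mul_sum]
    exact Finset.sum_congr rfl fun i _ => sum_kcomp_right hK hP hright (x i)
  have hPKP : ∑ i, ∑ j, kcomp G P (kcomp G K P) (x i) (x j)
      = (Fintype.card ι : ℝ) ^ 2 * ∫ z, ∫ w, K z w ∂G ∂G := by
    rw [Finset.sum_comm]
    simp_rw [sum_kcomp_left hP (hK.kcomp hP) hleft]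
    rw [← Finset.mul_sum, ← integral_finsetSum _ fun j _ => (hK.kcomp hP).integrable_left (x j)]
    simp_rw [sum_kcomp_right hK hP hright, integral_const_mul]
    ring
  simp only [projCentered, Finset.sum_sub_distrib, Finset.sum_add_distrib, hPK, hKP, hPKP,
    sum_sum_kcen]
  ring

end MarginalSums

section Score

variable {p : ℕ}

@[simp] lemma extScore_zero (v : Fin p → ℝ) : extScore v 0 = 1 := rfl

@[simp] lemma extScore_succ (v : Fin p → ℝ) (i : Fin p) : extScore v i.succ = v i := rfl

lemma sum_extScore {ι : Type*} [Fintype ι] {v : ι → Fin p → ℝ} (hv : ∀ j, ∑ i, v i j = 0) :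
    ∑ i, extScore (v i) = (Fintype.card ι : ℝ) • Pi.single 0 1 := by
  ext k
  rw [Finset.sum_apply]
  cases k using Fin.cases <;> simp [hv]

lemma det_eq_det_submatrix_succ_of_mulVec_single {R : Type*} [CommRing R]
    {M : Matrix (Fin (p + 1)) (Fin (p + 1)) R}
    (hM : M *ᵥ Pi.single 0 1 = Pi.single 0 1) : M.det = (M.submatrix Fin.succ Fin.succ).det := by
  have hcol (i : Fin (p + 1)) : M i 0 = (Pi.single 0 1 : Fin (p + 1) → R) i := by
    simpa using congrFun hM i
  rw [det_succ_column_zero, Finset.sum_eq_single 0 (fun i _ hi => by simp [hcol, hi]) (by simp)]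
  simp [hcol]

lemma inv_mulVec_eq_self {R m : Type*} [CommRing R] [Fintype m] [DecidableEq m]
    {A : Matrix m m R} (hA : IsUnit A.det) {v : m → R} (h : A *ᵥ v = v) : A⁻¹ *ᵥ v = v :=
  calc A⁻¹ *ᵥ v = A⁻¹ *ᵥ (A *ᵥ v) := by rw [h]
    _ = v := by rw [mulVec_mulVec, nonsing_inv_mul _ hA, one_mulVec]

/-- `J` for `v = u`, and `J*` for `v = u*`. -/
noncomputable def infoMatrix (G : Measure S) {m : Type*} (v : S → m → ℝ) : Matrix m m ℝ :=
  of fun i j => ∫ x, v x i * v x j ∂G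

noncomputable def extProj (G : Measure S) (u : S → Fin p → ℝ) (x y : S) : ℝ :=
  extScore (u x) ⬝ᵥ ((infoMatrix G fun z => extScore (u z))⁻¹ *ᵥ extScore (u y))

lemma infoMatrix_transpose (G : Measure S) {m : Type*} (v : S → m → ℝ) :
    (infoMatrix G v)ᵀ = infoMatrix G v := by
  ext i j
  simp [infoMatrix, mul_comm]

variable {G : Measure S} {u : S → Fin p → ℝ}

lemma isBoundedKernel_extProj (humeas : ∀ i, Measurable fun x => u x i)
    (hubdd : ∃ C, ∀ x i, |u x i| ≤ C) : IsBoundedKernel (extProj G u) := by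
  obtain ⟨C, hC⟩ := hubdd
  have hmeas : Measurable fun x => extScore (u x) := measurable_pi_iff.mpr fun k => by
    cases k using Fin.cases
    · exact measurable_const
    · exact humeas _
  have hbdd (x : S) : ‖extScore (u x)‖ ≤ max 1 C := by
    refine (pi_norm_le_iff_of_nonneg (zero_le_one.trans (le_max_left _ _))).mpr fun k => ?_
    cases k using Fin.cases
    · simp
    · simpa using (hC x _).trans (le_max_right _ _)
  exact .of_continuous hmeas hbdd (g := fun v w => v ⬝ᵥ (_ *ᵥ w))
    (continuous_fst.dotProduct (continuous_const.matrix_mulVec continuous_snd))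

variable [IsProbabilityMeasure G]

lemma infoMatrix_extScore_mulVec_single (hmean : ∀ i, ∫ x, u x i ∂G = 0) :
    infoMatrix G (fun x => extScore (u x)) *ᵥ Pi.single 0 1 = Pi.single 0 1 := by
  ext i
  cases i using Fin.cases <;> simp [infoMatrix, hmean]

lemma det_infoMatrix_extScore (hmean : ∀ i, ∫ x, u x i ∂G = 0) :
    (infoMatrix G fun x => extScore (u x)).det = (infoMatrix G u).det := by
  rw [det_eq_det_submatrix_succ_of_mulVec_single (infoMatrix_extScore_mulVec_single hmean)]
  rfl

lemma infoMatrix_extScore_inv_mulVec_single (hmean : ∀ i, ∫ x, u x i ∂G = 0)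
    (hJ : IsUnit (infoMatrix G u).det) :
    (infoMatrix G fun x => extScore (u x))⁻¹ *ᵥ Pi.single 0 1 = Pi.single 0 1 :=
  inv_mulVec_eq_self ((det_infoMatrix_extScore hmean).symm ▸ hJ)
    (infoMatrix_extScore_mulVec_single hmean)

variable {ι : Type*} [Fintype ι] {x : ι → S}

lemma sum_extProj_left (hmean : ∀ i, ∫ x, u x i ∂G = 0) (hJ : IsUnit (infoMatrix G u).det)
    (hscore : ∀ j, ∑ i, u (x i) j = 0) (z : S) :
    ∑ i, extProj G u (x i) z = Fintype.card ι := by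
  simp only [extProj]
  rw [← sum_dotProduct, sum_extScore hscore, smul_dotProduct, dotProduct_mulVec,
    ← mulVec_transpose, transpose_nonsing_inv, infoMatrix_transpose,
    infoMatrix_extScore_inv_mulVec_single hmean hJ]
  simp [single_dotProduct]

lemma sum_extProj_right (hmean : ∀ i, ∫ x, u x i ∂G = 0) (hJ : IsUnit (infoMatrix G u).det)
    (hscore : ∀ j, ∑ i, u (x i) j = 0) (z : S) :
    ∑ j, extProj G u z (x j) = Fintype.card ι := by
  simp only [extProj]
  rw [← dotProduct_sum, ← mulVec_sum, sum_extScore hscore, mulVec_smul,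
    infoMatrix_extScore_inv_mulVec_single hmean hJ]
  simp [dotProduct_single]

end Score

end

theorem score_centered_representation_general {S : Type*} [MeasurableSpace S]
    (G : Measure S) [IsProbabilityMeasure G]
    (K : S → S → ℝ)
    (hKmeas : Measurable (Function.uncurry K))
    (hKbdd : ∃ C : ℝ, ∀ x y, |K x y| ≤ C)
    (p : ℕ) (u : S → Fin p → ℝ)
    (humeas : ∀ i, Measurable fun x => u x i)
    (hubdd : ∃ Cu : ℝ, ∀ x i, |u x i| ≤ Cu)
    (hmean : ∀ i, ∫ x, u x i ∂G = 0)
    (J : Matrix (Fin p) (Fin p) ℝ)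
    (hJ : ∀ i j, J i j = ∫ x, u x i * u x j ∂G)
    (hJinv : IsUnit J.det)
    (Jstar : Matrix (Fin (p + 1)) (Fin (p + 1)) ℝ)
    (hJstar : ∀ i j, Jstar i j = ∫ x, extScore (u x) i * extScore (u x) j ∂G)
    (Pstar : S → S → ℝ)
    (hPstar : ∀ x y, Pstar x y = extScore (u x) ⬝ᵥ (Jstar⁻¹ *ᵥ extScore (u y)))
    (kscen : S → S → ℝ)
    (hkscen : ∀ x y, kscen x y =
      K x y - (∫ z, Pstar x z * K z y ∂G) - (∫ z, K x z * Pstar z y ∂G)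
        + ∫ z, ∫ w, Pstar x z * K z w * Pstar w y ∂G ∂G)
    (n : ℕ) (hn : 0 < n) (x : Fin n → S)
    (hscore : ∀ j, ∑ i, u (x i) j = 0) :
    (∑ i, ∑ j, kscen (x i) (x j) = ∑ i, ∑ j, kcen K G (x i) (x j)) ∧
    quadDist K (empiricalMeasure n x) G
      = ∫ s, ∫ t, kscen s t ∂(empiricalMeasure n x) ∂(empiricalMeasure n x) := by
  obtain rfl : J = infoMatrix G u := Matrix.ext hJ
  obtain rfl : Jstar = infoMatrix G fun x => extScore (u x) := Matrix.ext hJstar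
  obtain rfl : Pstar = extProj G u := funext₂ hPstar
  obtain rfl : kscen = projCentered G (extProj G u) K := funext₂ fun x y => by
    rw [hkscen, projCentered, kcomp_kcomp_apply]
    rfl
  have hK : IsBoundedKernel K := ⟨hKmeas, hKbdd⟩
  have hP : IsBoundedKernel (extProj G u) := isBoundedKernel_extProj humeas hubdd
  have hsum : ∑ i, ∑ j, projCentered G (extProj G u) K (x i) (x j)
      = ∑ i, ∑ j, kcen K G (x i) (x j) :=
    sum_sum_projCentered hK hP (sum_extProj_left hmean hJinv hscore)
      (sum_extProj_right hmean hJinv hscore)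
  refine ⟨hsum, ?_⟩
  rw [quadDist_empiricalMeasure hK hn.ne', integral_integral_empiricalMeasure x
    (hK.projCentered hP).measurable, hsum]

/-- with P*(x,y) = u*(x)ᵀ(J*)⁻¹u*(y) (u*(x) = (1,u(x)ᵀ)ᵀ,
J* = ∫ u*u*ᵀ dG) and the score-centered kernel
K_{scen(G)}(x,y) = K(x,y) − ∫P*(x,z)K(z,y)dG(z) − ∫K(x,z)P*(z,y)dG(z)
                 + ∬P*(x,z)K(z,w)P*(w,y)dG(z)dG(w),
if the points x_1,…,x_n satisfy the score equation Σ_i u(x_i) = 0, then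
Σ_i Σ_j K_{scen(G)}(x_i,x_j) = Σ_i Σ_j K_{cen(G)}(x_i,x_j); equivalently, with F̂ the
empirical measure, d_K(F̂,G) = ∬ K_{scen(G)} dF̂ dF̂. -/
theorem score_centered_representation {S : Type*} [MeasurableSpace S]
    (G : Measure S) [IsProbabilityMeasure G]
    (K : S → S → ℝ)
    (hKmeas : Measurable (Function.uncurry K))
    (hKbdd : ∃ C : ℝ, ∀ x y, |K x y| ≤ C)
    (hKsymm : ∀ x y, K x y = K y x)
    (p : ℕ) (u : S → Fin p → ℝ)
    (humeas : ∀ i, Measurable fun x => u x i)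
    (hubdd : ∃ Cu : ℝ, ∀ x i, |u x i| ≤ Cu)
    (hmean : ∀ i, ∫ x, u x i ∂G = 0)
    (J : Matrix (Fin p) (Fin p) ℝ)
    (hJ : ∀ i j, J i j = ∫ x, u x i * u x j ∂G)
    (hJinv : IsUnit J.det)
    (Jstar : Matrix (Fin (p + 1)) (Fin (p + 1)) ℝ)
    (hJstar : ∀ i j, Jstar i j = ∫ x, extScore (u x) i * extScore (u x) j ∂G)
    (Pstar : S → S → ℝ)
    (hPstar : ∀ x y, Pstar x y = extScore (u x) ⬝ᵥ (Jstar⁻¹ *ᵥ extScore (u y)))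
    (kscen : S → S → ℝ)
    (hkscen : ∀ x y, kscen x y =
      K x y - (∫ z, Pstar x z * K z y ∂G) - (∫ z, K x z * Pstar z y ∂G)
        + ∫ z, ∫ w, Pstar x z * K z w * Pstar w y ∂G ∂G)
    (n : ℕ) (hn : 0 < n) (x : Fin n → S)
    (hscore : ∀ j, ∑ i, u (x i) j = 0) :
    (∑ i, ∑ j, kscen (x i) (x j) = ∑ i, ∑ j, kcen K G (x i) (x j)) ∧
    quadDist K (empiricalMeasure n x) G
      = ∫ s, ∫ t, kscen s t ∂(empiricalMeasure n x) ∂(empiricalMeasure n x) :=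
  score_centered_representation_general G K hKmeas hKbdd p u humeas hubdd hmean J hJ hJinv Jstar
    hJstar Pstar hPstar kscen hkscen n hn x hscore
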